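/- Let $(S,\mathcal{F},\mu)$ be a $\sigma$-finite measure space, $H$ a separable real Hilbert space, and $F_n: S \to H$ measurable functions such that $\sup_n |F_n(y)|_H < \infty$ for $\mu$-a.e. $y$. Then there exists a measurable $F: S \to H$ and a subsequence $(n_k)$ such that $F_{n_k} \to F$ $\psi$-pseudo-weakly, where $\psi$ is the bounded radial map built from $\psi_0(r) = r/(1+|r|)$. -/

import Mathlib

open MeasureTheory Filter Set
open scoped ENNReal RealInnerProductSpace Topology

/-- The bounded radial map `ψ(h) = h/(1+‖h‖)` built from `ψ₀(r) = r/(1+|r|)`. -/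
noncomputable def psiMap {H : Type*} [NormedAddCommGroup H] [InnerProductSpace ℝ H]
    (h : H) : H := (1 / (1 + ‖h‖)) • h

/-- `ψ`-pseudo-weak convergence: `ψ(Fₙ) ⇀ ψ(F)` weakly in `L²(S; H, 𝟙_A μ)` for every
measurable `A` of finite measure. -/
def PseudoWeakTendsto {S : Type*} [MeasurableSpace S] (μ : Measure S)
    {H : Type*} [NormedAddCommGroup H] [InnerProductSpace ℝ H] [CompleteSpace H]
    (Fn : ℕ → S → H) (F : S → H) : Prop :=
  ∀ A : Set S, MeasurableSet A → μ A < ∞ →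
    ∀ G : S → H, MemLp G 2 (μ.restrict A) →
      Tendsto (fun n => ∫ y in A, ⟪psiMap (Fn n y), G y⟫ ∂μ) atTop
        (nhds (∫ y in A, ⟪psiMap (F y), G y⟫ ∂μ))

section PsiMap
variable {H : Type*} [NormedAddCommGroup H] [InnerProductSpace ℝ H]

lemma norm_psiMap (h : H) : ‖psiMap h‖ = ‖h‖ / (1 + ‖h‖) := by
  have h1 : (0:ℝ) < 1 + ‖h‖ := by positivity
  rw [psiMap, norm_smul, Real.norm_eq_abs, abs_of_pos (by positivity)]
  rw [one_div, inv_mul_eq_div]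

lemma psiMap_norm_le_one (h : H) : ‖psiMap h‖ ≤ 1 := by
  rw [norm_psiMap]
  have h1 : (0:ℝ) < 1 + ‖h‖ := by positivity
  rw [div_le_one h1]
  linarith

lemma psiMap_norm_le {h : H} {C : ℝ} (hC : 0 ≤ C) (hh : ‖h‖ ≤ C) :
    ‖psiMap h‖ ≤ C / (1 + C) := by
  rw [norm_psiMap]
  have h1 : (0:ℝ) < 1 + ‖h‖ := by positivity
  have h2 : (0:ℝ) < 1 + C := by positivity
  rw [div_le_div_iff₀ h1 h2]
  nlinarith [norm_nonneg h]

lemma continuous_psiMap : Continuous (psiMap : H → H) := by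
  apply Continuous.smul _ continuous_id
  exact (continuous_const.div (by continuity) (fun x => by positivity))

lemma psiMap_inv {x : H} (hx : ‖x‖ < 1) : psiMap ((1 - ‖x‖)⁻¹ • x) = x := by
  have h1 : (0:ℝ) < 1 - ‖x‖ := by linarith
  have hn : ‖(1 - ‖x‖)⁻¹ • x‖ = ‖x‖ / (1 - ‖x‖) := by
    rw [norm_smul, Real.norm_eq_abs, abs_of_pos (by positivity), inv_mul_eq_div]
  rw [psiMap, hn]
  have h2 : 1 + ‖x‖ / (1 - ‖x‖) = (1 - ‖x‖)⁻¹ := by field_simp; ring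
  rw [h2, one_div, inv_inv, smul_smul, mul_inv_cancel₀ h1.ne', one_smul]

lemma norm_le_of_inner_le_dense {x : H} {c : ℝ} (hc : 0 ≤ c) {D : Set H} (hD : Dense D)
    (h : ∀ e ∈ D, ⟪x, e⟫ ≤ c * ‖e‖) : ‖x‖ ≤ c := by
  obtain ⟨u, hu, hux⟩ := mem_closure_iff_seq_limit.1 (hD x)
  have h1 : Tendsto (fun n => ⟪x, u n⟫) atTop (𝓝 ⟪x, x⟫) :=
    (continuous_inner.comp (continuous_const.prodMk continuous_id)).continuousAt.tendsto.comp
      hux |>.congr (fun n => rfl)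
  have h2 : Tendsto (fun n => c * ‖u n‖) atTop (𝓝 (c * ‖x‖)) :=
    tendsto_const_nhds.mul hux.norm
  have h3 : ⟪x, x⟫ ≤ c * ‖x‖ :=
    le_of_tendsto_of_tendsto' h1 h2 fun n => h (u n) (hu n)
  rw [real_inner_self_eq_norm_sq] at h3
  rcases eq_or_lt_of_le (norm_nonneg x) with h0 | h0
  · rw [← h0]; exact hc
  · nlinarith

end PsiMap

lemma exists_subseq_weak_tendsto_family {E : ℕ → Type*}
    [∀ i, NormedAddCommGroup (E i)] [∀ i, InnerProductSpace ℝ (E i)]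
    [∀ i, CompleteSpace (E i)]
    (v : ∀ i, ℕ → E i) (C : ℕ → ℝ) (hv : ∀ i n, ‖v i n‖ ≤ C i) :
    ∃ k : ℕ → ℕ, StrictMono k ∧ ∀ i, ∃ V : E i,
      ∀ w : E i, Tendsto (fun j => ⟪v i (k j), w⟫) atTop (𝓝 ⟪V, w⟫) := by
  have hC0 : ∀ i, 0 ≤ C i := fun i => le_trans (norm_nonneg _) (hv i 0)
  have hsep : ∀ i, ∃ c : Set (E i), c.Countable ∧
      (closure (Submodule.span ℝ (Set.range (v i)) : Set (E i))) ⊆ closure c := by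
    intro i
    have h1 : TopologicalSpace.IsSeparable
        (closure (Submodule.span ℝ (Set.range (v i)) : Set (E i))) :=
      ((Set.countable_range (v i)).isSeparable.span).closure
    exact h1
  choose c hc hcc using hsep
  have hins : ∀ i, (insert (0 : E i) (c i)).Countable := fun i => (hc i).insert 0
  have hen : ∀ i, ∃ f : ℕ → E i, insert (0 : E i) (c i) = Set.range f := fun i =>
    (hins i).exists_eq_range (Set.insert_nonempty _ _)
  choose e he using hen
  have hclo : ∀ i, (closure (Submodule.span ℝ (Set.range (v i)) : Set (E i))) ⊆
      closure (Set.range (e i)) := by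
    intro i
    refine (hcc i).trans (closure_mono ?_)
    rw [← he i]; exact Set.subset_insert _ _
  set g : ℕ → (ℕ × ℕ → ℝ) := fun n p => ⟪v p.1 n, e p.1 p.2⟫ with hg
  set Q : Set (ℕ × ℕ → ℝ) :=
    Set.univ.pi fun p => Set.Icc (-(C p.1 * ‖e p.1 p.2‖)) (C p.1 * ‖e p.1 p.2‖) with hQ
  have hgQ : ∀ n, g n ∈ Q := by
    intro n
    rw [hQ, Set.mem_univ_pi]
    intro p
    rw [Set.mem_Icc, ← abs_le]
    calc |⟪v p.1 n, e p.1 p.2⟫| ≤ ‖v p.1 n‖ * ‖e p.1 p.2‖ := abs_real_inner_le_norm _ _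
    _ ≤ C p.1 * ‖e p.1 p.2‖ := mul_le_mul_of_nonneg_right (hv _ _) (norm_nonneg _)
  have hQc : IsCompact Q := isCompact_univ_pi fun p => isCompact_Icc
  obtain ⟨L, -, k, hk, hgk⟩ := hQc.tendsto_subseq hgQ
  refine ⟨k, hk, fun i => ?_⟩
  have hlim : ∀ m, Tendsto (fun j => ⟪v i (k j), e i m⟫) atTop (𝓝 (L (i, m))) := by
    intro m
    exact tendsto_pi_nhds.1 hgk (i, m)
  have hCauchy : ∀ w ∈ closure (Set.range (e i)), CauchySeq (fun j => ⟪v i (k j), w⟫) := by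
    intro w hw
    rw [Metric.cauchySeq_iff]
    intro ε hε
    set C' := C i + 1 with hC'
    have hC'pos : (0:ℝ) < C' := by have := hC0 i; linarith
    obtain ⟨w', hw', hww'⟩ : ∃ w' ∈ Set.range (e i), ‖w - w'‖ < ε / (3 * C') := by
      obtain ⟨w', h1, h2⟩ := Metric.mem_closure_iff.1 hw (ε / (3 * C')) (by positivity)
      exact ⟨w', h1, by rwa [dist_eq_norm] at h2⟩
    obtain ⟨m, rfl⟩ := hw'
    have hcau := (hlim m).cauchySeq
    rw [Metric.cauchySeq_iff] at hcau
    obtain ⟨N, hN⟩ := hcau (ε / 3) (by positivity)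
    refine ⟨N, fun a ha b hb => ?_⟩
    have key : ∀ n, |⟪v i n, w⟫ - ⟪v i n, e i m⟫| ≤ ε / 3 := by
      intro n
      rw [← inner_sub_right]
      calc |⟪v i n, w - e i m⟫| ≤ ‖v i n‖ * ‖w - e i m‖ := abs_real_inner_le_norm _ _
      _ ≤ C' * (ε / (3 * C')) := by
          apply mul_le_mul (by have := hv i n; linarith) hww'.le (norm_nonneg _) hC'pos.le
      _ = ε / 3 := by field_simp
    have h1 := key (k a)
    have h2 := key (k b)
    have h3 := hN a ha b hb
    rw [Real.dist_eq] at h3 ⊢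
    have t1 := abs_sub_le (⟪v i (k a), w⟫) (⟪v i (k a), e i m⟫) (⟪v i (k b), w⟫)
    have t2 := abs_sub_le (⟪v i (k a), e i m⟫) (⟪v i (k b), e i m⟫) (⟪v i (k b), w⟫)
    have h2' : |⟪v i (k b), e i m⟫ - ⟪v i (k b), w⟫| ≤ ε / 3 := by
      rw [abs_sub_comm]; exact h2
    linarith
  set K := (Submodule.span ℝ (Set.range (v i))).topologicalClosure with hK
  haveI : CompleteSpace K :=
    (Submodule.span ℝ (Set.range (v i))).isClosed_topologicalClosure.completeSpace_coe
  have hmemK : ∀ n, v i n ∈ K :=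
    fun n => Submodule.le_topologicalClosure _ (Submodule.subset_span (Set.mem_range_self n))
  have hproj : ∀ n w, ⟪v i n, w⟫ = ⟪v i n, (K.orthogonalProjectionOnto w : E i)⟫ := by
    intro n w
    have horth : w - (K.orthogonalProjectionOnto w : E i) ∈ Kᗮ :=
      K.sub_starProjection_mem_orthogonal w
    have h0 : ⟪v i n, w - (K.orthogonalProjectionOnto w : E i)⟫ = 0 :=
      Submodule.inner_right_of_mem_orthogonal (hmemK n) horth
    rw [inner_sub_right] at h0
    linarith
  have hPmem : ∀ w : E i, ((K.orthogonalProjectionOnto w : E i)) ∈ closure (Set.range (e i)) := by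
    intro w
    apply hclo i
    have : (K.orthogonalProjectionOnto w : E i) ∈ K := (K.orthogonalProjectionOnto w).2
    rwa [hK, ← Submodule.topologicalClosure_coe] at *
  have hCauchyAll : ∀ w : E i, CauchySeq (fun j => ⟪v i (k j), w⟫) := by
    intro w
    have := hCauchy _ (hPmem w)
    simpa only [← hproj] using this
  have htend : ∀ w : E i, ∃ l, Tendsto (fun j => ⟪v i (k j), w⟫) atTop (𝓝 l) :=
    fun w => cauchySeq_tendsto_of_complete (hCauchyAll w)
  choose Lf hLf using htend
  have hadd : ∀ w w', Lf (w + w') = Lf w + Lf w' := by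
    intro w w'
    refine tendsto_nhds_unique (hLf (w + w')) ?_
    simpa only [inner_add_right] using (hLf w).add (hLf w')
  have hsmul : ∀ (r : ℝ) w, Lf (r • w) = r * Lf w := by
    intro r w
    refine tendsto_nhds_unique (hLf (r • w)) ?_
    simpa only [real_inner_smul_right] using (hLf w).const_mul r
  have hbound : ∀ w, ‖Lf w‖ ≤ C i * ‖w‖ := by
    intro w
    rw [Real.norm_eq_abs]
    refine le_of_tendsto (hLf w).abs (Filter.Eventually.of_forall fun j => ?_)
    calc |⟪v i (k j), w⟫| ≤ ‖v i (k j)‖ * ‖w‖ := abs_real_inner_le_norm _ _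
    _ ≤ C i * ‖w‖ := mul_le_mul_of_nonneg_right (hv _ _) (norm_nonneg _)
  let Lmap : E i →L[ℝ] ℝ := LinearMap.mkContinuous
    { toFun := Lf, map_add' := hadd, map_smul' := hsmul } (C i) hbound
  refine ⟨(InnerProductSpace.toDual ℝ (E i)).symm Lmap, fun w => ?_⟩
  rw [InnerProductSpace.toDual_symm_apply]
  exact hLf w

section Aux
variable {S : Type*} [MeasurableSpace S] {μ : Measure S}
variable {H : Type*} [NormedAddCommGroup H] [InnerProductSpace ℝ H] [CompleteSpace H]

lemma memL2_integrable_inner {f g : S → H} (hf : MemLp f 2 μ) (hg : MemLp g 2 μ) :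
    Integrable (fun y => ⟪f y, g y⟫) μ := by
  have h := L2.integrable_inner (𝕜 := ℝ) (hf.toLp f) (hg.toLp g)
  refine h.congr ?_
  filter_upwards [hf.coeFn_toLp, hg.coeFn_toLp] with y h1 h2
  rw [h1, h2]

end Aux

/-- If `supₙ ‖Fₙ(y)‖ < ∞` for `μ`-a.e. `y`, then some subsequence of `(Fₙ)` converges
`ψ`-pseudo-weakly to a measurable `F`. -/
theorem exists_pseudoWeak_limit_of_ae_bounded
    {S : Type*} [MeasurableSpace S] (μ : Measure S) [SigmaFinite μ]
    {H : Type*} [NormedAddCommGroup H] [InnerProductSpace ℝ H] [CompleteSpace H]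
    [SecondCountableTopology H]
    (Fn : ℕ → S → H)
    (hFn : ∀ n, AEStronglyMeasurable (Fn n) μ)
    (hbdd : ∀ᵐ y ∂μ, BddAbove (Set.range fun n => ‖Fn n y‖)) :
    ∃ (F : S → H) (k : ℕ → ℕ), AEStronglyMeasurable F μ ∧ StrictMono k ∧
      PseudoWeakTendsto μ (fun j => Fn (k j)) F := by
  classical
  set s : ℕ → Set S := spanningSets μ with hs_def
  have hs_meas : ∀ i, MeasurableSet (s i) := measurableSet_spanningSets μ
  have hs_mono : Monotone s := monotone_spanningSets μ
  have hs_fin : ∀ i, μ (s i) < ∞ := measure_spanningSets_lt_top μ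
  have hs_univ : ⋃ i, s i = univ := iUnion_spanningSets μ
  -- measurable versions of the `Fₙ`
  set F' : ℕ → S → H := fun n => (hFn n).mk (Fn n) with hF'_def
  have hF'm : ∀ n, StronglyMeasurable (F' n) := fun n => (hFn n).stronglyMeasurable_mk
  have hF'e : ∀ n, Fn n =ᵐ[μ] F' n := fun n => (hFn n).ae_eq_mk
  set ψn : ℕ → S → H := fun n y => psiMap (F' n y) with hψ_def
  have hψm : ∀ n, StronglyMeasurable (ψn n) :=
    fun n => continuous_psiMap.comp_stronglyMeasurable (hF'm n)
  have hψ1 : ∀ n y, ‖ψn n y‖ ≤ 1 := fun n y => psiMap_norm_le_one _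
  haveI hfinr : ∀ i, IsFiniteMeasure (μ.restrict (s i)) := fun i =>
    ⟨by rw [Measure.restrict_apply_univ]; exact hs_fin i⟩
  have hmem : ∀ i n, MemLp (ψn n) 2 (μ.restrict (s i)) := fun i n =>
    MemLp.of_bound (hψm n).aestronglyMeasurable 1 (Eventually.of_forall (hψ1 n))
  let v : ∀ i : ℕ, ℕ → Lp H 2 (μ.restrict (s i)) := fun i n => (hmem i n).toLp (ψn n)
  -- uniform norm bounds
  have hvC : ∀ i n, ‖v i n‖ ≤
      (measureUnivNNReal (μ.restrict (s i)) : ℝ) ^ (2 : ℝ≥0∞).toReal⁻¹ * 1 := by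
    intro i n
    refine Lp.norm_le_of_ae_bound zero_le_one ?_
    filter_upwards [(hmem i n).coeFn_toLp] with y hy
    rw [hy]; exact hψ1 n y
  obtain ⟨k, hk, hVi⟩ := exists_subseq_weak_tendsto_family v _ hvC
  choose V hV using hVi
  set W : ℕ → S → H := fun i => (V i : S → H) with hW_def
  have hWm : ∀ i, StronglyMeasurable (W i) := fun i => Lp.stronglyMeasurable (V i)
  have hWmem : ∀ i, MemLp (W i) 2 (μ.restrict (s i)) := fun i => Lp.memLp (V i)
  -- weak convergence, in integral form
  have hconv : ∀ i (G : S → H), MemLp G 2 (μ.restrict (s i)) →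
      Tendsto (fun j => ∫ y, ⟪ψn (k j) y, G y⟫ ∂(μ.restrict (s i))) atTop
        (𝓝 (∫ y, ⟪W i y, G y⟫ ∂(μ.restrict (s i)))) := by
    intro i G hG
    have h1 := hV i (hG.toLp G)
    have he1 : ∀ n, ⟪v i n, hG.toLp G⟫ = ∫ y, ⟪ψn n y, G y⟫ ∂(μ.restrict (s i)) := by
      intro n
      rw [L2.inner_def]
      apply integral_congr_ae
      filter_upwards [(hmem i n).coeFn_toLp, hG.coeFn_toLp] with y hy1 hy2
      rw [hy1, hy2]
    have he2 : ⟪V i, hG.toLp G⟫ = ∫ y, ⟪W i y, G y⟫ ∂(μ.restrict (s i)) := by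
      rw [L2.inner_def]
      apply integral_congr_ae
      filter_upwards [hG.coeFn_toLp] with y hy2
      rw [hy2]
    rw [← he2]
    exact h1.congr fun j => he1 (k j)
  -- consistency of local weak limits
  have hconsist : ∀ i i', i ≤ i' → W i' =ᵐ[μ.restrict (s i)] W i := by
    intro i i' hii
    have hWi : MemLp (W i) 2 (μ.restrict (s i)) := hWmem i
    have hWi' : MemLp (W i') 2 (μ.restrict (s i)) :=
      (hWmem i').mono_measure (Measure.restrict_mono (hs_mono hii) le_rfl)
    set G : S → H := fun y => W i' y - W i y with hG_def
    have hGm : StronglyMeasurable G := (hWm i').sub (hWm i)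
    have hGmem : MemLp G 2 (μ.restrict (s i)) := hWi'.sub hWi
    have hres : (μ.restrict (s i')).restrict (s i) = μ.restrict (s i) := by
      rw [Measure.restrict_restrict (hs_meas i), inter_eq_self_of_subset_left (hs_mono hii)]
    have hGmem' : MemLp ((s i).indicator G) 2 (μ.restrict (s i')) := by
      constructor
      · exact (hGm.indicator (hs_meas i)).aestronglyMeasurable
      · rw [eLpNorm_indicator_eq_eLpNorm_restrict (hs_meas i), hres]
        exact hGmem.2
    have hind : ∀ (f : S → H), ∫ y, ⟪f y, (s i).indicator G y⟫ ∂(μ.restrict (s i')) =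
        ∫ y, ⟪f y, G y⟫ ∂(μ.restrict (s i)) := by
      intro f
      have hpt : ∀ y, ⟪f y, (s i).indicator G y⟫ =
          (s i).indicator (fun y => ⟪f y, G y⟫) y := by
        intro y
        by_cases hy : y ∈ s i
        · simp [Set.indicator_of_mem hy]
        · simp [Set.indicator_of_notMem hy]
      simp_rw [hpt]
      rw [integral_indicator (hs_meas i), hres]
    have t1 := hconv i G hGmem
    have t2 := (hconv i' ((s i).indicator G) hGmem').congr fun j => hind (ψn (k j))
    have huniq : ∫ y, ⟪W i' y, (s i).indicator G y⟫ ∂(μ.restrict (s i')) =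
        ∫ y, ⟪W i y, G y⟫ ∂(μ.restrict (s i)) := tendsto_nhds_unique t2 t1
    rw [hind (W i')] at huniq
    have hsub : ∫ y, ⟪G y, G y⟫ ∂(μ.restrict (s i)) = 0 := by
      have hii1 := memL2_integrable_inner hWi' hGmem
      have hii2 := memL2_integrable_inner hWi hGmem
      have : ∀ y, ⟪G y, G y⟫ = ⟪W i' y, G y⟫ - ⟪W i y, G y⟫ := by
        intro y
        rw [hG_def]
        simp only [inner_sub_left]
      simp_rw [this]
      rw [integral_sub hii1 hii2, huniq, sub_self]
    have hzero : G =ᵐ[μ.restrict (s i)] 0 := by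
      have hnn : 0 ≤ᵐ[μ.restrict (s i)] fun y => ⟪G y, G y⟫ :=
        Eventually.of_forall fun y => real_inner_self_nonneg
      have := (integral_eq_zero_iff_of_nonneg_ae hnn
        (memL2_integrable_inner hGmem hGmem)).1 hsub
      filter_upwards [this] with y hy
      have : ⟪G y, G y⟫ = 0 := hy
      exact inner_self_eq_zero.1 this
    filter_upwards [hzero] with y hy
    have : W i' y - W i y = 0 := hy
    exact sub_eq_zero.1 this
  -- glue the local limits
  set t : ℕ → Set S := disjointed s with ht_def
  have ht_meas : ∀ m, MeasurableSet (t m) := MeasurableSet.disjointed hs_meas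
  have ht_sub : ∀ m, t m ⊆ s m := disjointed_subset s
  have ht_disj : Pairwise (Function.onFun Disjoint t) := disjoint_disjointed s
  have ht_union : ⋃ m, t m = univ := by rw [ht_def, iUnion_disjointed, hs_univ]
  have hex : ∀ y : S, ∃ m, y ∈ t m := fun y =>
    mem_iUnion.1 (ht_union ▸ mem_univ y)
  have ht_le : ∀ {m i : ℕ} {y : S}, y ∈ t m → y ∈ s i → m ≤ i := by
    intro m i y hym hyi
    by_contra hmi
    push_neg at hmi
    obtain ⟨m', rfl⟩ : ∃ m', m = m' + 1 := ⟨m - 1, by omega⟩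
    have h1 : t (m' + 1) = s (m' + 1) \ s m' := hs_mono.disjointed_succ (not_isMax m')
    have : y ∈ s m' := hs_mono (by omega : i ≤ m') hyi
    rw [h1] at hym
    exact hym.2 this
  set u : S → H := fun y => ∑' m, (t m).indicator (W m) y with hu_def
  have hu_single : ∀ {y : S} {m₀ : ℕ}, y ∈ t m₀ → u y = W m₀ y := by
    intro y m₀ hy
    have hz : ∀ m, m ≠ m₀ → (t m).indicator (W m) y = 0 := by
      intro m hm
      apply indicator_of_notMem
      intro hmem'
      exact (Set.disjoint_left.1 (ht_disj hm)) hmem' hy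
    rw [hu_def]
    simp only
    rw [tsum_eq_single m₀ hz, indicator_of_mem hy]
  have hu_sm : StronglyMeasurable u := by
    apply stronglyMeasurable_of_tendsto (f := fun N y =>
      ∑ m ∈ Finset.range N, (t m).indicator (W m) y) atTop
    · intro N
      apply Finset.stronglyMeasurable_fun_sum
      intro m _
      exact (hWm m).indicator (ht_meas m)
    · rw [tendsto_pi_nhds]
      intro y
      obtain ⟨m₀, hm₀⟩ := hex y
      have hz : ∀ m, m ≠ m₀ → (t m).indicator (W m) y = 0 := by
        intro m hm
        apply indicator_of_notMem
        intro hmem'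
        exact (Set.disjoint_left.1 (ht_disj hm)) hmem' hm₀
      have hh : HasSum (fun m => (t m).indicator (W m) y) ((t m₀).indicator (W m₀) y) :=
        hasSum_single m₀ hz
      have := hh.tendsto_sum_nat
      rwa [show (t m₀).indicator (W m₀) y = u y by
        rw [hu_single hm₀, indicator_of_mem hm₀]] at this
  have hu_eq : ∀ i, u =ᵐ[μ.restrict (s i)] W i := by
    intro i
    have hsub : s i ⊆ ⋃ m ∈ Finset.range (i + 1), t m := by
      intro y hy
      obtain ⟨m, hm⟩ := hex y
      have : m ≤ i := ht_le hm hy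
      exact mem_biUnion (Finset.mem_range.2 (by omega)) hm
    have hpc : ∀ m, m ≤ i → u =ᵐ[μ.restrict (t m)] W i := by
      intro m hmi
      have h1 : W i =ᵐ[μ.restrict (t m)] W m :=
        ae_restrict_of_ae_restrict_of_subset (ht_sub m) (hconsist m i hmi)
      have h2 : ∀ᵐ y ∂(μ.restrict (t m)), y ∈ t m :=
        ae_restrict_mem (ht_meas m)
      filter_upwards [h1, h2] with y hy1 hy2
      rw [hu_single hy2, ← hy1]
    have hall : ∀ᵐ y ∂(μ.restrict (⋃ m ∈ Finset.range (i + 1), t m)), u y = W i y := by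
      rw [ae_restrict_biUnion_finset_iff]
      intro m hm
      rcases Nat.lt_succ_iff.1 (Finset.mem_range.1 hm) with hmi
      exact hpc m hmi
    exact hall.filter_mono (ae_mono (Measure.restrict_mono hsub le_rfl))
  -- pointwise bounds on the local limits
  set B : ℕ → Set S := fun C => {y | ∀ n, ‖F' n y‖ ≤ (C : ℝ)} with hB_def
  have hB_meas : ∀ C, MeasurableSet (B C) := by
    intro C
    have : B C = ⋂ n, {y | ‖F' n y‖ ≤ (C : ℝ)} := by ext y; simp [hB_def]
    rw [this]
    exact MeasurableSet.iInter fun n =>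
      measurableSet_le (hF'm n).norm.measurable measurable_const
  set ρ : ℕ → ℝ := fun C => (C : ℝ) / (1 + (C : ℝ)) with hρ_def
  have hρ0 : ∀ C, 0 ≤ ρ C := fun C => by positivity
  have hρ1 : ∀ C, ρ C < 1 := by
    intro C
    rw [hρ_def]
    simp only
    rw [div_lt_one (by positivity)]
    linarith
  have hψB : ∀ (C n : ℕ) (y : S), y ∈ B C → ‖ψn n y‖ ≤ ρ C := fun C n y hy =>
    psiMap_norm_le (Nat.cast_nonneg C) (hy n)
  obtain ⟨D, hDc, hDd⟩ := TopologicalSpace.exists_countable_dense H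
  have hWb : ∀ i C : ℕ, ∀ᵐ y ∂(μ.restrict (s i ∩ B C)), ‖W i y‖ ≤ ρ C := by
    intro i C
    have hiBm : MeasurableSet (s i ∩ B C) := (hs_meas i).inter (hB_meas C)
    have hWir : MemLp (W i) 2 (μ.restrict (s i ∩ B C)) :=
      (hWmem i).mono_measure (Measure.restrict_mono inter_subset_left le_rfl)
    haveI : IsFiniteMeasure (μ.restrict (s i ∩ B C)) :=
      ⟨by rw [Measure.restrict_apply_univ]; exact
        lt_of_le_of_lt (measure_mono inter_subset_left) (hs_fin i)⟩
    have he : ∀ e : H, ∀ᵐ y ∂(μ.restrict (s i ∩ B C)), ⟪W i y, e⟫ ≤ ρ C * ‖e‖ := by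
      intro e
      have hWint : Integrable (fun y => ⟪W i y, e⟫) (μ.restrict (s i ∩ B C)) :=
        memL2_integrable_inner hWir (memLp_const e)
      have hkey : ∀ E : Set S, MeasurableSet E → μ.restrict (s i ∩ B C) E < ∞ →
          0 ≤ ∫ y in E, (ρ C * ‖e‖ - ⟪W i y, e⟫) ∂(μ.restrict (s i ∩ B C)) := by
        intro E hE _
        set A' := E ∩ (s i ∩ B C) with hA'_def
        have hA'm : MeasurableSet A' := hE.inter hiBm
        have hA'fin : μ A' < ∞ :=
          lt_of_le_of_lt (measure_mono (inter_subset_right.trans inter_subset_left)) (hs_fin i)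
        have hA'sub : A' ⊆ s i := inter_subset_right.trans inter_subset_left
        have hrr : (μ.restrict (s i ∩ B C)).restrict E = μ.restrict A' := by
          rw [Measure.restrict_restrict hE]
        have hrr2 : (μ.restrict (s i)).restrict A' = μ.restrict A' := by
          rw [Measure.restrict_restrict hA'm, inter_eq_self_of_subset_left hA'sub]
        set Ge : S → H := A'.indicator (fun _ => e) with hGe_def
        have hGemem : MemLp Ge 2 (μ.restrict (s i)) := by
          refine MemLp.of_bound
            ((stronglyMeasurable_const.indicator hA'm).aestronglyMeasurable) ‖e‖
            (Eventually.of_forall fun y => ?_)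
          rw [hGe_def]
          by_cases hy : y ∈ A'
          · rw [indicator_of_mem hy]
          · rw [indicator_of_notMem hy]; simp
        have hindint : ∀ f : S → H, ∫ y, ⟪f y, Ge y⟫ ∂(μ.restrict (s i)) =
            ∫ y in A', ⟪f y, e⟫ ∂μ := by
          intro f
          have hpt : ∀ y, ⟪f y, Ge y⟫ = A'.indicator (fun y => ⟪f y, e⟫) y := by
            intro y
            by_cases hy : y ∈ A'
            · simp [hGe_def, indicator_of_mem hy]
            · simp [hGe_def, indicator_of_notMem hy]
          simp_rw [hpt]
          rw [integral_indicator hA'm, hrr2]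
        have hlim := (hconv i Ge hGemem).congr fun j => hindint (ψn (k j))
        rw [hindint (W i)] at hlim
        have hterm : ∀ j, ∫ y in A', ⟪ψn (k j) y, e⟫ ∂μ ≤ ρ C * ‖e‖ * (μ A').toReal := by
          intro j
          have hb := norm_setIntegral_le_of_norm_le_const (f := fun y => ⟪ψn (k j) y, e⟫)
            (C := ρ C * ‖e‖) hA'fin ?_
          · calc ∫ y in A', ⟪ψn (k j) y, e⟫ ∂μ
                ≤ ‖∫ y in A', ⟪ψn (k j) y, e⟫ ∂μ‖ := le_abs_self _
            _ ≤ ρ C * ‖e‖ * (μ A').toReal := hb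
          · intro y hy
            have hyB : y ∈ B C := hy.2.2
            calc ‖⟪ψn (k j) y, e⟫‖ = |⟪ψn (k j) y, e⟫| := rfl
            _ ≤ ‖ψn (k j) y‖ * ‖e‖ := abs_real_inner_le_norm _ _
            _ ≤ ρ C * ‖e‖ := mul_le_mul_of_nonneg_right (hψB C (k j) y hyB) (norm_nonneg _)
        have hWle : ∫ y in A', ⟪W i y, e⟫ ∂μ ≤ ρ C * ‖e‖ * (μ A').toReal :=
          le_of_tendsto hlim (Eventually.of_forall hterm)
        rw [integral_sub (integrable_const _) hWint.integrableOn, setIntegral_const,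
          smul_eq_mul, sub_nonneg]
        have hEeq : ∫ y in E, ⟪W i y, e⟫ ∂(μ.restrict (s i ∩ B C)) =
            ∫ y in A', ⟪W i y, e⟫ ∂μ := by
          rw [show (∫ y in E, ⟪W i y, e⟫ ∂(μ.restrict (s i ∩ B C))) =
            ∫ y, ⟪W i y, e⟫ ∂((μ.restrict (s i ∩ B C)).restrict E) from rfl, hrr]
        have hμeq : (μ.restrict (s i ∩ B C)) E = μ A' := by
          rw [Measure.restrict_apply hE]
        rw [hEeq, measureReal_def, hμeq]
        calc ∫ y in A', ⟪W i y, e⟫ ∂μ ≤ ρ C * ‖e‖ * (μ A').toReal := hWle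
        _ = (μ A').toReal * (ρ C * ‖e‖) := by ring
      have h0 := ae_nonneg_of_forall_setIntegral_nonneg
        ((integrable_const _).sub hWint) hkey
      filter_upwards [h0] with y hy
      have : (0:ℝ) ≤ ρ C * ‖e‖ - ⟪W i y, e⟫ := hy
      linarith
    have hae : ∀ᵐ y ∂(μ.restrict (s i ∩ B C)), ∀ e ∈ D, ⟪W i y, e⟫ ≤ ρ C * ‖e‖ :=
      (ae_ball_iff hDc).2 fun e _ => he e
    filter_upwards [hae] with y hy
    exact norm_le_of_inner_le_dense (hρ0 C) hDd fun e heD => hy e heD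
  -- a.e. boundedness in terms of the sets B C
  have hbdd' : ∀ᵐ y ∂μ, ∃ C : ℕ, y ∈ B C := by
    have hall : ∀ᵐ y ∂μ, ∀ n, Fn n y = F' n y := ae_all_iff.2 fun n => hF'e n
    filter_upwards [hbdd, hall] with y hy hyeq
    obtain ⟨b, hb⟩ := hy
    refine ⟨⌈b⌉₊, fun n => ?_⟩
    rw [← hyeq n]
    exact le_trans (hb ⟨n, rfl⟩) (Nat.le_ceil b)
  -- the glued limit has norm < 1 a.e.
  have hu_lt : ∀ᵐ y ∂μ, ‖u y‖ < 1 := by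
    have hbad : ∀ m C : ℕ, ∀ᵐ y ∂μ, y ∈ s m ∩ B C → ‖W m y‖ ≤ ρ C := by
      intro m C
      have h1 := hWb m C
      rwa [ae_restrict_iff' ((hs_meas m).inter (hB_meas C))] at h1
    have hballae : ∀ᵐ y ∂μ, ∀ m C : ℕ, y ∈ s m ∩ B C → ‖W m y‖ ≤ ρ C :=
      ae_all_iff.2 fun m => ae_all_iff.2 fun C => hbad m C
    filter_upwards [hbdd', hballae] with y hyC hygood
    obtain ⟨C, hyB⟩ := hyC
    obtain ⟨m, hym⟩ := hex y
    have hyS : y ∈ s m := ht_sub m hym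
    have h3 : ‖W m y‖ ≤ ρ C := hygood m C ⟨hyS, hyB⟩
    rw [hu_single hym]
    exact lt_of_le_of_lt h3 (hρ1 C)
  -- the limit function `F`
  set F : S → H := fun y => (if ‖u y‖ < 1 then (1 - ‖u y‖)⁻¹ else 0) • u y with hF_def
  have hF_sm : StronglyMeasurable F := by
    have hn : Measurable fun y => ‖u y‖ := hu_sm.norm.measurable
    have hscal : Measurable fun y => (if ‖u y‖ < 1 then (1 - ‖u y‖)⁻¹ else (0:ℝ)) := by
      have hset : MeasurableSet {y : S | ‖u y‖ < 1} := measurableSet_lt hn measurable_const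
      exact Measurable.ite hset ((measurable_const.sub hn).inv) measurable_const
    exact hscal.stronglyMeasurable.smul hu_sm
  have hψF : ∀ᵐ y ∂μ, psiMap (F y) = u y := by
    filter_upwards [hu_lt] with y hy
    rw [hF_def]
    simp only [if_pos hy]
    exact psiMap_inv hy
  refine ⟨F, k, hF_sm.aestronglyMeasurable, hk, ?_⟩
  intro A hA hμA G hG
  haveI : IsFiniteMeasure (μ.restrict A) := ⟨by rw [Measure.restrict_apply_univ]; exact hμA⟩
  have hGnint : Integrable (fun y => ‖G y‖) (μ.restrict A) := (hG.integrable one_le_two).norm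
  have hGion : IntegrableOn (fun y => ‖G y‖) A μ := hGnint
  have hrepl : ∀ n, ∫ y in A, ⟪psiMap (Fn n y), G y⟫ ∂μ = ∫ y in A, ⟪ψn n y, G y⟫ ∂μ := by
    intro n
    apply integral_congr_ae
    apply ae_restrict_of_ae
    filter_upwards [hF'e n] with y hy
    rw [hψ_def]
    simp only
    rw [hy]
  have hreplF : ∫ y in A, ⟪psiMap (F y), G y⟫ ∂μ = ∫ y in A, ⟪u y, G y⟫ ∂μ := by
    apply integral_congr_ae
    apply ae_restrict_of_ae
    filter_upwards [hψF] with y hy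
    rw [hy]
  rw [hreplF]
  have hψint : ∀ n, IntegrableOn (fun y => ⟪ψn n y, G y⟫) A μ := by
    intro n
    refine Integrable.mono' hGnint (((hψm n).aestronglyMeasurable.restrict).inner hG.1)
      (Eventually.of_forall fun y => ?_)
    calc ‖⟪ψn n y, G y⟫‖ = |⟪ψn n y, G y⟫| := rfl
    _ ≤ ‖ψn n y‖ * ‖G y‖ := abs_real_inner_le_norm _ _
    _ ≤ 1 * ‖G y‖ := mul_le_mul_of_nonneg_right (hψ1 n y) (norm_nonneg _)
    _ = ‖G y‖ := one_mul _
  have huint : IntegrableOn (fun y => ⟪u y, G y⟫) A μ := by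
    refine Integrable.mono' hGnint ((hu_sm.aestronglyMeasurable.restrict).inner hG.1) ?_
    filter_upwards [ae_restrict_of_ae hu_lt] with y hy
    calc ‖⟪u y, G y⟫‖ = |⟪u y, G y⟫| := rfl
    _ ≤ ‖u y‖ * ‖G y‖ := abs_real_inner_le_norm _ _
    _ ≤ 1 * ‖G y‖ := mul_le_mul_of_nonneg_right hy.le (norm_nonneg _)
    _ = ‖G y‖ := one_mul _
  set δ : ℕ → ℝ := fun i => ∫ y in A \ s i, ‖G y‖ ∂μ with hδ_def
  have hδ0 : Tendsto δ atTop (𝓝 0) := by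
    have h1 : Tendsto (fun i => ∫ y in A \ s i, ‖G y‖ ∂μ) atTop
        (𝓝 (∫ y in ⋂ i, A \ s i, ‖G y‖ ∂μ)) := by
      apply tendsto_setIntegral_of_antitone (fun i => hA.diff (hs_meas i))
        (fun i j hij => diff_subset_diff_right (hs_mono hij))
      exact ⟨0, hGion.mono_set diff_subset⟩
    have h2 : ⋂ i, A \ s i = (∅ : Set S) := by
      rw [← diff_iUnion, hs_univ, diff_univ]
    rwa [h2, setIntegral_empty] at h1
  have hδnn : ∀ i, 0 ≤ δ i := fun i => integral_nonneg fun y => norm_nonneg _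
  have hb1 : ∀ j i, |(∫ y in A, ⟪ψn (k j) y, G y⟫ ∂μ)
      - ∫ y in A ∩ s i, ⟪ψn (k j) y, G y⟫ ∂μ| ≤ δ i := by
    intro j i
    have hsplit := integral_inter_add_diff (hs_meas i) (hψint (k j))
    have heq : (∫ y in A, ⟪ψn (k j) y, G y⟫ ∂μ) - ∫ y in A ∩ s i, ⟪ψn (k j) y, G y⟫ ∂μ
        = ∫ y in A \ s i, ⟪ψn (k j) y, G y⟫ ∂μ := by linarith
    rw [heq]
    calc |∫ y in A \ s i, ⟪ψn (k j) y, G y⟫ ∂μ|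
        ≤ ∫ y in A \ s i, |⟪ψn (k j) y, G y⟫| ∂μ := by
          simpa using norm_integral_le_integral_norm (μ := μ.restrict (A \ s i))
            (fun y => ⟪ψn (k j) y, G y⟫)
    _ ≤ δ i := by
      refine integral_mono ((hψint (k j)).mono_set diff_subset).abs
        (hGion.mono_set diff_subset) fun y => ?_
      calc |⟪ψn (k j) y, G y⟫| ≤ ‖ψn (k j) y‖ * ‖G y‖ := abs_real_inner_le_norm _ _
      _ ≤ 1 * ‖G y‖ := mul_le_mul_of_nonneg_right (hψ1 (k j) y) (norm_nonneg _)
      _ = ‖G y‖ := one_mul _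
  have hb2 : ∀ i, |(∫ y in A, ⟪u y, G y⟫ ∂μ) - ∫ y in A ∩ s i, ⟪u y, G y⟫ ∂μ| ≤ δ i := by
    intro i
    have hsplit := integral_inter_add_diff (hs_meas i) huint
    have heq : (∫ y in A, ⟪u y, G y⟫ ∂μ) - ∫ y in A ∩ s i, ⟪u y, G y⟫ ∂μ
        = ∫ y in A \ s i, ⟪u y, G y⟫ ∂μ := by linarith
    rw [heq]
    calc |∫ y in A \ s i, ⟪u y, G y⟫ ∂μ|
        ≤ ∫ y in A \ s i, |⟪u y, G y⟫| ∂μ := by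
          simpa using norm_integral_le_integral_norm (μ := μ.restrict (A \ s i))
            (fun y => ⟪u y, G y⟫)
    _ ≤ δ i := by
      refine integral_mono_ae (huint.mono_set diff_subset).abs
        (hGion.mono_set diff_subset) ?_
      filter_upwards [ae_restrict_of_ae hu_lt] with y hy
      calc |⟪u y, G y⟫| ≤ ‖u y‖ * ‖G y‖ := abs_real_inner_le_norm _ _
      _ ≤ 1 * ‖G y‖ := mul_le_mul_of_nonneg_right hy.le (norm_nonneg _)
      _ = ‖G y‖ := one_mul _
  have hmid : ∀ i, Tendsto (fun j => ∫ y in A ∩ s i, ⟪ψn (k j) y, G y⟫ ∂μ) atTop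
      (𝓝 (∫ y in A ∩ s i, ⟪u y, G y⟫ ∂μ)) := by
    intro i
    set GA : S → H := A.indicator G with hGA_def
    have hGA_ae : AEStronglyMeasurable GA μ := by
      have h1 : ∀ᵐ y ∂μ, y ∈ A → G y = hG.1.mk G y := (ae_restrict_iff' hA).1 hG.1.ae_eq_mk
      refine ⟨A.indicator (hG.1.mk G), hG.1.stronglyMeasurable_mk.indicator hA, ?_⟩
      filter_upwards [h1] with y hy
      rw [hGA_def]
      by_cases hyA : y ∈ A
      · rw [indicator_of_mem hyA, indicator_of_mem hyA, hy hyA]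
      · rw [indicator_of_notMem hyA, indicator_of_notMem hyA]
    have hGAmem : MemLp GA 2 (μ.restrict (s i)) := by
      constructor
      · exact hGA_ae.restrict
      · calc eLpNorm GA 2 (μ.restrict (s i)) ≤ eLpNorm GA 2 μ :=
            eLpNorm_mono_measure _ Measure.restrict_le_self
        _ = eLpNorm G 2 (μ.restrict A) := eLpNorm_indicator_eq_eLpNorm_restrict hA
        _ < ∞ := hG.2
    have hindint : ∀ f : S → H, ∫ y, ⟪f y, GA y⟫ ∂(μ.restrict (s i)) =
        ∫ y in A ∩ s i, ⟪f y, G y⟫ ∂μ := by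
      intro f
      have hpt : ∀ y, ⟪f y, GA y⟫ = A.indicator (fun y => ⟪f y, G y⟫) y := by
        intro y
        by_cases hy : y ∈ A
        · simp [hGA_def, indicator_of_mem hy]
        · simp [hGA_def, indicator_of_notMem hy]
      simp_rw [hpt]
      rw [integral_indicator hA, Measure.restrict_restrict hA]
    have hlim := (hconv i GA hGAmem).congr fun j => hindint (ψn (k j))
    rw [hindint (W i)] at hlim
    have hWu : ∫ y in A ∩ s i, ⟪W i y, G y⟫ ∂μ = ∫ y in A ∩ s i, ⟪u y, G y⟫ ∂μ := by
      apply integral_congr_ae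
      have h2 : u =ᵐ[μ.restrict (A ∩ s i)] W i :=
        (hu_eq i).filter_mono (ae_mono (Measure.restrict_mono inter_subset_right le_rfl))
      filter_upwards [h2] with y hy
      rw [hy]
    rwa [hWu] at hlim
  have hfinal : Tendsto (fun j => ∫ y in A, ⟪ψn (k j) y, G y⟫ ∂μ) atTop
      (𝓝 (∫ y in A, ⟪u y, G y⟫ ∂μ)) := by
    rw [Metric.tendsto_atTop]
    intro ε hε
    obtain ⟨i, hi⟩ : ∃ i, δ i < ε / 3 :=
      (hδ0.eventually (gt_mem_nhds (show (0:ℝ) < ε / 3 by positivity))).exists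
    have h4 := hmid i
    rw [Metric.tendsto_atTop] at h4
    obtain ⟨N, hN⟩ := h4 (ε / 3) (by positivity)
    refine ⟨N, fun j hj => ?_⟩
    have e1 := hb1 j i
    have e2 := hb2 i
    have e3 := hN j hj
    rw [Real.dist_eq] at e3 ⊢
    have t1 := abs_sub_le (∫ y in A, ⟪ψn (k j) y, G y⟫ ∂μ)
      (∫ y in A ∩ s i, ⟪ψn (k j) y, G y⟫ ∂μ) (∫ y in A, ⟪u y, G y⟫ ∂μ)
    have t2 := abs_sub_le (∫ y in A ∩ s i, ⟪ψn (k j) y, G y⟫ ∂μ)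
      (∫ y in A ∩ s i, ⟪u y, G y⟫ ∂μ) (∫ y in A, ⟪u y, G y⟫ ∂μ)
    have e2' : |(∫ y in A ∩ s i, ⟪u y, G y⟫ ∂μ) - ∫ y in A, ⟪u y, G y⟫ ∂μ| ≤ δ i := by
      rw [abs_sub_comm]; exact e2
    linarith
  exact hfinal.congr fun j => (hrepl (k j)).symm
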